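/- Remainders are involutively unique with respect to a strong involutive basis: if G is a noncommutative Involutive Basis with respect to a strong involutive division I, then a polynomial p is conventionally reducible by G if and only if it is involutively reducible by G; consequently the involutive remainder of any polynomial modulo G equals its (unique) conventional remainder. -/

import Mathlib

/-! Framework: noncommutative polynomials over the free associative algebra
`k⟨x_1, …, x_n⟩`, realised as the monoid algebra of the free monoid on
`Fin n`; admissible monomial orderings; noncommutative involutive divisions. -/

/-- Noncommutative monomials: words over the alphabet `x_1, …, x_n`. -/
abbrev NCWord (n : ℕ) : Type := FreeMonoid (Fin n)

/-- Noncommutative polynomials: the free associative algebra `k⟨x_1, …, x_n⟩`. -/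
abbrev NCPoly (k : Type) [Field k] (n : ℕ) : Type := MonoidAlgebra k (NCWord n)

/-- An admissible monomial ordering on noncommutative monomials: a total order
with `1` least and compatible with two-sided multiplication. -/
structure AdmOrder (n : ℕ) where
  le : NCWord n → NCWord n → Prop
  refl : ∀ a, le a a
  trans : ∀ {a b c}, le a b → le b c → le a c
  antisymm : ∀ {a b}, le a b → le b a → a = b
  total : ∀ a b, le a b ∨ le b a
  one_le : ∀ a, le 1 a
  mul_le_mul : ∀ {a b} (l r : NCWord n), le a b → le (l * a * r) (l * b * r)

/-- A noncommutative involutive division. -/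
structure InvDivision (n : ℕ) where
  Lmult : Set (NCWord n) → NCWord n → Set (Fin n)
  Rmult : Set (NCWord n) → NCWord n → Set (Fin n)

/-- The factorisation `w = l·u·r` witnesses involutive divisibility of `w` by
`u` (relative to `U`): the adjoining letters are multiplicative for `u`. -/
def OkWitness {n : ℕ} (I : InvDivision n) (U : Set (NCWord n))
    (u l r : NCWord n) : Prop :=
  (∀ x : Fin n, (FreeMonoid.toList l).getLast? = some x → x ∈ I.Lmult U u) ∧
  (∀ x : Fin n, (FreeMonoid.toList r).head? = some x → x ∈ I.Rmult U u)

/-- `u` involutively divides `w` relative to `U`. -/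
def InvDiv {n : ℕ} (I : InvDivision n) (U : Set (NCWord n))
    (u w : NCWord n) : Prop :=
  ∃ l r : NCWord n, w = l * u * r ∧ OkWitness I U u l r

/-- The involutive cone of `u` relative to `U`. -/
def InvCone {n : ℕ} (I : InvDivision n) (U : Set (NCWord n))
    (u : NCWord n) : Set (NCWord n) :=
  {w : NCWord n | InvDiv I U u w}

/-- `I` is a strong involutive division. -/
def StrongDiv {n : ℕ} (I : InvDivision n) : Prop :=
  (∀ U : Set (NCWord n), ∀ u₁ ∈ U, ∀ u₂ ∈ U,
    (InvCone I U u₁ ∩ InvCone I U u₂).Nonempty →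
      InvCone I U u₁ ⊆ InvCone I U u₂ ∨ InvCone I U u₂ ⊆ InvCone I U u₁) ∧
  (∀ U : Set (NCWord n), ∀ u ∈ U, ∀ w l₁ r₁ l₂ r₂ : NCWord n,
    w = l₁ * u * r₁ → OkWitness I U u l₁ r₁ →
    w = l₂ * u * r₂ → OkWitness I U u l₂ r₂ → l₁ = l₂ ∧ r₁ = r₂) ∧
  (∀ U V : Set (NCWord n), V ⊆ U → ∀ v ∈ V,
    I.Lmult U v ⊆ I.Lmult V v ∧ I.Rmult U v ⊆ I.Rmult V v)

variable {k : Type} [Field k] {n : ℕ}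

/-- One step of involutive reduction of `f` by the set `P`. -/
def IStep {n : ℕ} (I : InvDivision n)
    (lm : NCPoly k n → NCWord n) (P : Finset (NCPoly k n))
    (f g : NCPoly k n) : Prop :=
  ∃ p ∈ P, ∃ w ∈ f.coeff.support, ∃ l r : NCWord n,
    w = l * lm p * r ∧ OkWitness I (lm '' (↑P : Set (NCPoly k n))) (lm p) l r ∧
    g = f - (f.coeff w / p.coeff (lm p)) •
      (MonoidAlgebra.single l (1 : k) * p * MonoidAlgebra.single r (1 : k))

/-- One step of conventional reduction of `f` by the set `P`. -/
def CStep {n : ℕ} (lm : NCPoly k n → NCWord n) (P : Finset (NCPoly k n))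
    (f g : NCPoly k n) : Prop :=
  ∃ p ∈ P, ∃ w ∈ f.coeff.support, ∃ l r : NCWord n,
    w = l * lm p * r ∧
    g = f - (f.coeff w / p.coeff (lm p)) •
      (MonoidAlgebra.single l (1 : k) * p * MonoidAlgebra.single r (1 : k))

/-- `r` is an involutive normal form (involutive remainder) of `f` modulo `P`. -/
def INormalForm {n : ℕ} (I : InvDivision n)
    (lm : NCPoly k n → NCWord n) (P : Finset (NCPoly k n))
    (f r : NCPoly k n) : Prop :=
  Relation.ReflTransGen (IStep I lm P) f r ∧ ∀ g, ¬ IStep I lm P r g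

/-- `r` is a conventional normal form (conventional remainder) of `f` modulo
`P`. -/
def CNormalForm {n : ℕ} (lm : NCPoly k n → NCWord n) (P : Finset (NCPoly k n))
    (f r : NCPoly k n) : Prop :=
  Relation.ReflTransGen (CStep lm P) f r ∧ ∀ g, ¬ CStep lm P r g

/-- `P` is autoreduced with respect to `I`. -/
def Autoreduced {n : ℕ} (I : InvDivision n)
    (lm : NCPoly k n → NCWord n) (P : Finset (NCPoly k n)) : Prop :=
  ∀ p ∈ P, ∀ q ∈ P, q ≠ p → ∀ w ∈ p.coeff.support,
    ¬ InvDiv I (lm '' (↑P : Set (NCPoly k n))) (lm q) w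

/-- `G` is an involutive basis with respect to `I`. -/
def InvolutiveBasis {n : ℕ} (I : InvDivision n)
    (lm : NCPoly k n → NCWord n) (G : Finset (NCPoly k n)) : Prop :=
  Autoreduced I lm G ∧
  ∀ g ∈ G, ∀ u v : NCWord n,
    Relation.ReflTransGen (IStep I lm G)
      (MonoidAlgebra.single u (1 : k) * g * MonoidAlgebra.single v (1 : k)) 0

section Aux

variable {k : Type} [Field k] {n : ℕ}

lemma NC.conj_inj (l r : NCWord n) : Function.Injective (fun u : NCWord n => l * u * r) := by
  intro a b h
  simp only [] at h
  exact mul_left_cancel (mul_right_cancel h)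

lemma NC.conj_eq (l r : NCWord n) (p : NCPoly k n) :
    (MonoidAlgebra.single l (1:k) * p * MonoidAlgebra.single r 1).coeff =
    Finsupp.mapDomain (fun u => l * u * r) p.coeff := by
  induction p using MonoidAlgebra.induction_on with
  | of a =>
    rw [show (MonoidAlgebra.of k (NCWord n) a) = MonoidAlgebra.single a (1:k) from rfl,
      MonoidAlgebra.single_mul_single, MonoidAlgebra.single_mul_single]
    simp [Finsupp.mapDomain_single, MonoidAlgebra.coeff_single]
  | add f g hf hg =>
    rw [mul_add, add_mul, MonoidAlgebra.coeff_add, hf, hg, MonoidAlgebra.coeff_add,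
      Finsupp.mapDomain_add]
  | smul r f hf =>
    rw [mul_smul_comm, smul_mul_assoc, MonoidAlgebra.coeff_smul, hf, MonoidAlgebra.coeff_smul,
      Finsupp.mapDomain_smul]

lemma NC.conj_apply (l r : NCWord n) (p : NCPoly k n) (u : NCWord n) :
    (MonoidAlgebra.single l (1:k) * p * MonoidAlgebra.single r 1 : NCPoly k n).coeff (l * u * r) = p.coeff u := by
  rw [NC.conj_eq]
  exact Finsupp.mapDomain_apply (NC.conj_inj l r) p.coeff u

lemma NC.conj_support [DecidableEq (NCWord n)] (l r : NCWord n) (p : NCPoly k n) :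
    (MonoidAlgebra.single l (1:k) * p * MonoidAlgebra.single r 1).coeff.support
      = p.coeff.support.image (fun u => l * u * r) := by
  rw [NC.conj_eq]
  exact Finsupp.mapDomain_support_of_injective (NC.conj_inj l r) p.coeff

/-- a maximum of a nonempty finset under an admissible order -/
lemma NC.exists_max (O : AdmOrder n) {α : Type} (f : α → NCWord n)
    (s : Finset α) (hs : s.Nonempty) :
    ∃ b ∈ s, ∀ a ∈ s, O.le (f a) (f b) := by
  classical
  revert hs
  induction s using Finset.induction with
  | empty => intro hs; exact absurd hs (by simp)
  | @insert x s hx ih =>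
    intro _
    rcases s.eq_empty_or_nonempty with h | h
    · subst h; exact ⟨x, by simp, by simp [O.refl]⟩
    · obtain ⟨b, hb, hmax⟩ := ih h
      rcases O.total (f x) (f b) with hle | hle
      · exact ⟨b, Finset.mem_insert_of_mem hb, by
          intro a ha
          rcases Finset.mem_insert.mp ha with rfl | ha
          · exact hle
          · exact hmax a ha⟩
      · exact ⟨x, Finset.mem_insert_self x _, by
          intro a ha
          rcases Finset.mem_insert.mp ha with rfl | ha
          · exact O.refl _
          · exact O.trans (hmax a ha) hle⟩

end Aux
/-- **Remainders are involutively unique with respect to a strong involutive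
basis.**  If `G` is a noncommutative involutive basis with respect to a strong
involutive division `I` (and an admissible monomial ordering `O`), then a
polynomial is conventionally reducible by `G` if and only if it is
involutively reducible by `G`; consequently any involutive remainder of any
polynomial modulo `G` equals any (the unique) conventional remainder. -/
theorem involutive_remainder_unique {k : Type} [Field k] {n : ℕ}
    (O : AdmOrder n) (I : InvDivision n) (hI : StrongDiv I)
    (lm : NCPoly k n → NCWord n)
    (hlm : ∀ p : NCPoly k n, p ≠ 0 →
      lm p ∈ p.coeff.support ∧ ∀ a ∈ p.coeff.support, O.le a (lm p))
    (G : Finset (NCPoly k n)) (hG0 : (0 : NCPoly k n) ∉ G)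
    (hGbasis : InvolutiveBasis I lm G) :
    (∀ p : NCPoly k n, (∃ q, CStep lm G p q) ↔ (∃ q, IStep I lm G p q)) ∧
    (∀ p r₁ r₂ : NCPoly k n,
      INormalForm I lm G p r₁ → CNormalForm lm G p r₂ → r₁ = r₂) := by
  classical
  have hGne : ∀ g ∈ G, g ≠ (0 : NCPoly k n) := fun g hg h => hG0 (h ▸ hg)
  set U : Set (NCWord n) := lm '' (↑G : Set (NCPoly k n)) with hU
  -- divisibility predicate
  let Div : NCWord n → Prop := fun w =>
    ∃ g ∈ G, ∃ l r : NCWord n, w = l * lm g * r ∧ OkWitness I U (lm g) l r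
  -- leading word facts for conjugates
  have hlead : ∀ g ∈ G, ∀ l r : NCWord n,
      (MonoidAlgebra.single l (1:k) * g * MonoidAlgebra.single r 1 : NCPoly k n).coeff (l * lm g * r) = g.coeff (lm g) ∧
      g.coeff (lm g) ≠ 0 ∧
      (∀ a ∈ (MonoidAlgebra.single l (1:k) * g * MonoidAlgebra.single r 1 : NCPoly k n).coeff.support,
        O.le a (l * lm g * r)) := by
    intro g hg l r
    obtain ⟨hmem, hmax⟩ := hlm g (hGne g hg)
    refine ⟨NC.conj_apply l r g (lm g), Finsupp.mem_support_iff.mp hmem, ?_⟩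
    intro a ha
    rw [NC.conj_support] at ha
    obtain ⟨u, hu, rfl⟩ := Finset.mem_image.mp ha
    exact O.mul_le_mul l r (hmax u hu)
  -- the maximal word of a polynomial reducing involutively to 0 is involutively divisible
  have hchain : ∀ f : NCPoly k n, Relation.ReflTransGen (IStep I lm G) f 0 →
      ∀ w, f.coeff w ≠ 0 → (∀ a ∈ f.coeff.support, O.le a w) → Div w := by
    intro f hf
    induction hf using Relation.ReflTransGen.head_induction_on with
    | refl => intro w hw _; simp at hw
    | @head f₁ fc hstep hrest ih =>
      obtain ⟨g, hg, w', hw', l, r, hw'eq, hok, hceq⟩ := hstep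
      subst hceq
      intro w hw hmaxw
      by_cases hww : w' = w
      · exact ⟨g, hg, l, r, hww ▸ hw'eq, hok⟩
      · -- the maximal word w survives the step
        set b : NCPoly k n := MonoidAlgebra.single l (1:k) * g * MonoidAlgebra.single r 1 with hb
        set q : k := f₁.coeff w' / g.coeff (lm g) with hq
        have hble : ∀ a ∈ b.coeff.support, O.le a w' := by
          intro a ha
          rw [hw'eq]; exact (hlead g hg l r).2.2 a ha
        have hw'lew : O.le w' w := hmaxw w' hw'
        have hbw : b.coeff w = 0 := by
          by_contra h
          exact hww (O.antisymm hw'lew (hble w (Finsupp.mem_support_iff.mpr h)))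
        apply ih w
        · rw [MonoidAlgebra.coeff_sub, Finsupp.sub_apply, MonoidAlgebra.coeff_smul, Finsupp.smul_apply, hbw, smul_zero, sub_zero]
          exact hw
        · intro a ha
          rw [Finsupp.mem_support_iff, MonoidAlgebra.coeff_sub, Finsupp.sub_apply, MonoidAlgebra.coeff_smul, Finsupp.smul_apply] at ha
          by_cases hfa : f₁.coeff a = 0
          · have hba : b.coeff a ≠ 0 := by
              intro h0; rw [hfa, h0, smul_zero, sub_zero] at ha; exact ha rfl
            exact O.trans (hble a (Finsupp.mem_support_iff.mpr hba)) hw'lew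
          · exact hmaxw a (Finsupp.mem_support_iff.mpr hfa)
  -- conventional divisibility implies involutive divisibility
  have hCtoDiv : ∀ w : NCWord n, (∃ g ∈ G, ∃ l r : NCWord n, w = l * lm g * r) → Div w := by
    rintro w ⟨g, hg, l, r, rfl⟩
    obtain ⟨h1, h2, h3⟩ := hlead g hg l r
    exact hchain _ (hGbasis.2 g hg l r) _ (by rw [h1]; exact h2) h3
  -- part 1
  have part1 : ∀ p : NCPoly k n, (∃ q, CStep lm G p q) ↔ (∃ q, IStep I lm G p q) := by
    intro p
    constructor
    · rintro ⟨q, g, hg, w, hw, l, r, hweq, rfl⟩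
      obtain ⟨g', hg', l', r', hweq', hok'⟩ := hCtoDiv w ⟨g, hg, l, r, hweq⟩
      exact ⟨_, g', hg', w, hw, l', r', hweq', hok', rfl⟩
    · rintro ⟨q, g, hg, w, hw, l, r, hweq, hok, rfl⟩
      exact ⟨_, g, hg, w, hw, l, r, hweq, rfl⟩
  -- uniqueness of the involutive divisor (strong division + autoreducedness)
  have hself : ∀ u : NCWord n, InvDiv I U u u := by
    intro u
    refine ⟨1, 1, by rw [one_mul, mul_one], ?_, ?_⟩
    · intro x hx; simp at hx
    · intro x hx; simp at hx
  have huniq : ∀ (w : NCWord n) (g₁ l₁ r₁ g₂ l₂ r₂), g₁ ∈ G → g₂ ∈ G →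
      w = l₁ * lm g₁ * r₁ → OkWitness I U (lm g₁) l₁ r₁ →
      w = l₂ * lm g₂ * r₂ → OkWitness I U (lm g₂) l₂ r₂ →
      g₁ = g₂ ∧ l₁ = l₂ ∧ r₁ = r₂ := by
    intro w g₁ l₁ r₁ g₂ l₂ r₂ hg₁ hg₂ he₁ ho₁ he₂ ho₂
    have hmem₁ : lm g₁ ∈ U := ⟨g₁, hg₁, rfl⟩
    have hmem₂ : lm g₂ ∈ U := ⟨g₂, hg₂, rfl⟩
    have hne : (InvCone I U (lm g₁) ∩ InvCone I U (lm g₂)).Nonempty :=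
      ⟨w, ⟨l₁, r₁, he₁, ho₁⟩, ⟨l₂, r₂, he₂, ho₂⟩⟩
    have geq : g₁ = g₂ := by
      by_contra hne'
      rcases hI.1 U (lm g₁) hmem₁ (lm g₂) hmem₂ hne with hsub | hsub
      · exact hGbasis.1 g₁ hg₁ g₂ hg₂ (fun h => hne' h.symm) (lm g₁)
          ((hlm g₁ (hGne g₁ hg₁)).1) (hsub (hself (lm g₁)))
      · exact hGbasis.1 g₂ hg₂ g₁ hg₁ hne' (lm g₂)
          ((hlm g₂ (hGne g₂ hg₂)).1) (hsub (hself (lm g₂)))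
    subst geq
    obtain ⟨hl, hr⟩ := hI.2.1 U (lm g₁) hmem₁ w l₁ r₁ l₂ r₂ he₁ ho₁ he₂ ho₂
    exact ⟨rfl, hl, hr⟩
  -- the span of the involutive cone generators
  set S : Set (NCPoly k n) := {b : NCPoly k n | ∃ g ∈ G, ∃ l r : NCWord n,
    OkWitness I U (lm g) l r ∧
    b = MonoidAlgebra.single l (1:k) * g * MonoidAlgebra.single r 1} with hS
  set C : Submodule k (NCPoly k n) := Submodule.span k S with hC
  have hIstep_diff : ∀ f f' : NCPoly k n,
      Relation.ReflTransGen (IStep I lm G) f f' → f - f' ∈ C := by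
    intro f f' h
    induction h with
    | refl => simp only [sub_self]; exact C.zero_mem
    | @tail fmid fc hrtg hstep ih =>
      obtain ⟨g, hg, w, hw, l, r, hweq, hok, rfl⟩ := hstep
      have hbmem : (MonoidAlgebra.single l (1:k) * g * MonoidAlgebra.single r 1) ∈ C :=
        Submodule.subset_span ⟨g, hg, l, r, hok, rfl⟩
      have heq : f - (fmid - (fmid.coeff w / g.coeff (lm g)) •
          (MonoidAlgebra.single l (1:k) * g * MonoidAlgebra.single r 1)) =
          (f - fmid) + (fmid.coeff w / g.coeff (lm g)) •
          (MonoidAlgebra.single l (1:k) * g * MonoidAlgebra.single r 1) := by abel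
      rw [heq]
      exact C.add_mem ih (C.smul_mem _ hbmem)
  have hbC : ∀ g ∈ G, ∀ l r : NCWord n,
      (MonoidAlgebra.single l (1:k) * g * MonoidAlgebra.single r 1) ∈ C := by
    intro g hg l r
    have := hIstep_diff _ _ (hGbasis.2 g hg l r)
    simpa using this
  have hCstep_diff : ∀ f f' : NCPoly k n,
      Relation.ReflTransGen (CStep lm G) f f' → f - f' ∈ C := by
    intro f f' h
    induction h with
    | refl => simp only [sub_self]; exact C.zero_mem
    | @tail fmid fc hrtg hstep ih =>
      obtain ⟨g, hg, w, hw, l, r, hweq, rfl⟩ := hstep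
      have heq : f - (fmid - (fmid.coeff w / g.coeff (lm g)) •
          (MonoidAlgebra.single l (1:k) * g * MonoidAlgebra.single r 1)) =
          (f - fmid) + (fmid.coeff w / g.coeff (lm g)) •
          (MonoidAlgebra.single l (1:k) * g * MonoidAlgebra.single r 1) := by abel
      rw [heq]
      exact C.add_mem ih (C.smul_mem _ (hbC g hg l r))
  -- every nonzero member of the span has an involutively divisible support word
  have hspan : ∀ h : NCPoly k n, h ∈ C → h ≠ 0 → ∃ w, h.coeff w ≠ 0 ∧ Div w := by
    intro h hmem hne
    obtain ⟨cf, hsupp, hsum⟩ := Submodule.mem_span_set.mp hmem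
    have hkey : ∀ b ∈ cf.support, ∃ g ∈ G, ∃ l r : NCWord n,
        OkWitness I U (lm g) l r ∧
        b = MonoidAlgebra.single l (1:k) * g * MonoidAlgebra.single r 1 ∧
        lm b = l * lm g * r := by
      intro b hb
      obtain ⟨g, hg, l, r, hok, rfl⟩ := hsupp hb
      obtain ⟨h1, h2, h3⟩ := hlead g hg l r
      have hbne : (MonoidAlgebra.single l (1:k) * g * MonoidAlgebra.single r 1) ≠ 0 := by
        intro h0
        rw [h0] at h1
        exact h2 (by simpa using h1.symm)
      obtain ⟨hm, hmax⟩ := hlm _ hbne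
      have hin : l * lm g * r ∈
          (MonoidAlgebra.single l (1:k) * g * MonoidAlgebra.single r 1 : NCPoly k n).coeff.support :=
        Finsupp.mem_support_iff.mpr (by rw [h1]; exact h2)
      exact ⟨g, hg, l, r, hok, rfl, O.antisymm (h3 _ hm) (hmax _ hin)⟩
    have hne' : cf.support.Nonempty := by
      by_contra hcne
      rw [Finset.not_nonempty_iff_eq_empty] at hcne
      apply hne
      rw [← hsum, Finsupp.sum, hcne, Finset.sum_empty]
    obtain ⟨bm, hbm, hbmax⟩ := NC.exists_max O lm cf.support hne'
    obtain ⟨g, hg, l, r, hok, hbeq, hlmb⟩ := hkey bm hbm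
    refine ⟨lm bm, ?_, g, hg, l, r, hlmb, hok⟩
    have happ : h.coeff (lm bm) = cf bm * bm.coeff (lm bm) := by
      rw [← hsum, MonoidAlgebra.coeff_finsuppSum, Finsupp.sum_apply, Finsupp.sum, Finset.sum_eq_single bm]
      · rw [MonoidAlgebra.coeff_smul, Finsupp.smul_apply, smul_eq_mul]
      · intro b hb hne2
        obtain ⟨g', hg', l', r', hok', hbeq', hlmb'⟩ := hkey b hb
        rw [MonoidAlgebra.coeff_smul, Finsupp.smul_apply, smul_eq_mul]
        rcases eq_or_ne (b.coeff (lm bm)) 0 with h0 | h0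
        · rw [h0, mul_zero]
        · exfalso
          have hbne0 : b ≠ 0 := by
            intro hz; rw [hz] at h0; exact h0 rfl
          have hle1 : O.le (lm bm) (lm b) :=
            (hlm b hbne0).2 (lm bm) (Finsupp.mem_support_iff.mpr h0)
          have hle2 : O.le (lm b) (lm bm) := hbmax b hb
          have heqlm : lm b = lm bm := O.antisymm hle2 hle1
          have hglr : g' = g ∧ l' = l ∧ r' = r := by
            apply huniq (lm bm) g' l' r' g l r hg' hg
            · rw [← heqlm]; exact hlmb'
            · exact hok'
            · exact hlmb
            · exact hok
          obtain ⟨e1, e2, e3⟩ := hglr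
          apply hne2
          rw [hbeq', hbeq, e1, e2, e3]
      · intro hnot; exact absurd hbm hnot
    rw [happ]
    have hbmval : bm.coeff (lm bm) ≠ 0 := by
      rw [hlmb, hbeq, (hlead g hg l r).1]
      exact (hlead g hg l r).2.1
    exact mul_ne_zero (Finsupp.mem_support_iff.mp hbm) hbmval
  -- part 2
  refine ⟨part1, ?_⟩
  rintro p r₁ r₂ ⟨hch₁, hnf₁⟩ ⟨hch₂, hnf₂⟩
  by_contra hner
  have h1 : p - r₁ ∈ C := hIstep_diff _ _ hch₁
  have h2 : p - r₂ ∈ C := hCstep_diff _ _ hch₂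
  have h3 : r₁ - r₂ ∈ C := by
    have hsm := C.sub_mem h2 h1
    have heq : (p - r₂) - (p - r₁) = r₁ - r₂ := by abel
    rwa [heq] at hsm
  obtain ⟨w, hwne, g, hg, l, r, hweq, hok⟩ := hspan _ h3 (sub_ne_zero_of_ne hner)
  have hcases : r₁.coeff w ≠ 0 ∨ r₂.coeff w ≠ 0 := by
    by_contra hcon
    push_neg at hcon
    rw [MonoidAlgebra.coeff_sub, Finsupp.sub_apply, hcon.1, hcon.2, sub_zero] at hwne
    exact hwne rfl
  rcases hcases with hcase | hcase
  · exact hnf₁ _ ⟨g, hg, w, Finsupp.mem_support_iff.mpr hcase, l, r, hweq, hok, rfl⟩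
  · exact hnf₂ _ ⟨g, hg, w, Finsupp.mem_support_iff.mpr hcase, l, r, hweq, rfl⟩
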